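/- arXiv:2603.09602 — 6 statements merged into one kernel-verified Lean document; each statement's English description precedes it below -/
import Mathlib

section
/- Let ι be a nonempty finite type, let σ : ι → ℝ with σ_u ≥ 0 for all u and S := Σ_{u∈ι} σ_u² > 0, and let P be the product measure on (ι → ℝ) of independent standard Gaussians gaussianReal 0 1. Then for every Δ > 0, P{ z : Σ_{u∈ι} σ_u · (z u)² ≤ Σ_{u∈ι} σ_u − 2Δ } ≤ exp(−Δ²/S). -/
open ProbabilityTheory MeasureTheory Real
open scoped ENNReal NNReal

lemma my_log_lower (x : ℝ) (hx : 0 ≤ x) : x - x ^ 2 / 2 ≤ Real.log (1 + x) := by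
  have hmono : MonotoneOn (fun y : ℝ => Real.log (1 + y) - (y - y ^ 2 / 2)) (Set.Ici 0) := by
    have hcont : ContinuousOn (fun y : ℝ => Real.log (1 + y) - (y - y ^ 2 / 2)) (Set.Ici 0) := by
      refine ContinuousOn.sub ?_ (by fun_prop)
      exact (continuous_const.add continuous_id).continuousOn.log
        (fun y hy => by simp only [Set.mem_Ici] at hy; intro h; simp only [Pi.add_apply, id_eq] at h; nlinarith)
    refine monotoneOn_of_deriv_nonneg (convex_Ici 0) hcont ?_ ?_
    · intro y hy
      rw [interior_Ici] at hy
      have hy' : (0:ℝ) < y := hy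
      have h1 : HasDerivAt (fun y : ℝ => Real.log (1 + y) - (y - y ^ 2 / 2))
          ((1 + y)⁻¹ - (1 - y)) y := by
        have hlog : HasDerivAt (fun y : ℝ => Real.log (1 + y)) ((1 + y)⁻¹) y := by
          have := ((hasDerivAt_id y).const_add 1).log (by intro h; simp only [id_eq] at h; nlinarith)
          simpa using this
        have hpoly : HasDerivAt (fun y : ℝ => y - y ^ 2 / 2) (1 - y) y := by
          have := ((hasDerivAt_id y).sub (((hasDerivAt_pow 2 y)).div_const 2))
          exact this.congr_deriv (by norm_num)
        exact hlog.sub hpoly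
      exact h1.differentiableAt.differentiableWithinAt
    · intro y hy
      rw [interior_Ici] at hy
      have hy' : (0:ℝ) < y := hy
      have h1 : HasDerivAt (fun y : ℝ => Real.log (1 + y) - (y - y ^ 2 / 2))
          ((1 + y)⁻¹ - (1 - y)) y := by
        have hlog : HasDerivAt (fun y : ℝ => Real.log (1 + y)) ((1 + y)⁻¹) y := by
          have := ((hasDerivAt_id y).const_add 1).log (by intro h; simp only [id_eq] at h; nlinarith)
          simpa using this
        have hpoly : HasDerivAt (fun y : ℝ => y - y ^ 2 / 2) (1 - y) y := by
          have := ((hasDerivAt_id y).sub (((hasDerivAt_pow 2 y)).div_const 2))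
          exact this.congr_deriv (by norm_num)
        exact hlog.sub hpoly
      rw [h1.deriv]
      have h2 : (1 - y) * (1 + y) ≤ 1 := by nlinarith
      have h3 : 1 - y ≤ (1 + y)⁻¹ := by
        rw [← one_div, le_div_iff₀ (by linarith)]
        nlinarith
      linarith
  have := hmono (Set.self_mem_Ici) (Set.mem_Ici.2 hx) hx
  simpa using this

lemma my_gauss_int (c : ℝ) (hc : 0 ≤ c) :
    ∫ x, Real.exp (-(c * x ^ 2)) ∂(gaussianReal 0 1) = (Real.sqrt (1 + 2 * c))⁻¹ := by
  have hc2 : (0:ℝ) < c + 2⁻¹ := by linarith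
  rw [gaussianReal_of_var_ne_zero 0 one_ne_zero]
  have hpdf : gaussianPDF (0:ℝ) 1 = fun x => ((gaussianPDFReal 0 1 x).toNNReal : ℝ≥0∞) := by
    ext x; rw [gaussianPDF_def]; rfl
  rw [hpdf, integral_withDensity_eq_integral_smul
    ((measurable_gaussianPDFReal 0 1).real_toNNReal) _]
  have heq : ∀ x : ℝ, (gaussianPDFReal 0 1 x).toNNReal • Real.exp (-(c * x ^ 2))
      = (Real.sqrt (2 * π))⁻¹ * Real.exp (-((c + 2⁻¹) * x ^ 2)) := by
    intro x
    rw [NNReal.smul_def, smul_eq_mul, Real.coe_toNNReal _ (gaussianPDFReal_nonneg 0 1 x)]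
    rw [gaussianPDFReal]
    push_cast
    rw [mul_one, mul_assoc, ← Real.exp_add]
    congr 1
    ring
  simp_rw [heq]
  rw [integral_const_mul]
  have : ∀ a : ℝ, Real.exp (-((c + 2⁻¹) * a ^ 2)) = Real.exp (-(c + 2⁻¹) * a ^ 2) := by
    intro a; ring_nf
  simp_rw [this]
  rw [integral_gaussian, ← Real.sqrt_inv, ← Real.sqrt_mul (by positivity : (0:ℝ) ≤ (2*π)⁻¹)]
  congr 1
  have hπ : (0:ℝ) < π := Real.pi_pos
  field_simp
  rw [← Real.sqrt_mul (div_nonneg zero_le_one (by linarith)), add_comm (2 * c) 1,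
    one_div_mul_cancel (show (1 + 2 * c : ℝ) ≠ 0 from ne_of_gt (by linarith)), Real.sqrt_one]

lemma my_sqrt_le_exp (c : ℝ) (hc : 0 ≤ c) :
    (Real.sqrt (1 + 2 * c))⁻¹ ≤ Real.exp (-c + c ^ 2) := by
  have h1 : (0:ℝ) < 1 + 2 * c := by linarith
  have key : Real.exp (c - c ^ 2) ≤ Real.sqrt (1 + 2 * c) := by
    rw [Real.le_sqrt' (Real.exp_pos _)]
    rw [← Real.exp_nat_mul]
    have h2 := my_log_lower (2 * c) (by linarith)
    have h3 : (2:ℕ) * (c - c ^ 2) ≤ Real.log (1 + 2 * c) := by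
      push_cast; nlinarith [h2]
    calc Real.exp ((2:ℕ) * (c - c ^ 2)) ≤ Real.exp (Real.log (1 + 2 * c)) :=
          Real.exp_le_exp.2 h3
      _ = 1 + 2 * c := Real.exp_log h1
  calc (Real.sqrt (1 + 2 * c))⁻¹ ≤ (Real.exp (c - c ^ 2))⁻¹ :=
        inv_anti₀ (Real.exp_pos _) key
    _ = Real.exp (-c + c ^ 2) := by rw [← Real.exp_neg]; ring_nf

lemma my_pi_prod_int {ι : Type*} [Fintype ι] (f : ι → ℝ → ℝ)
    (hf : ∀ i, Integrable (f i) (gaussianReal 0 1)) :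
    Integrable (fun z : ι → ℝ => ∏ i, f i (z i)) (Measure.pi fun _ : ι => gaussianReal 0 1) ∧
    ∫ z : ι → ℝ, ∏ i, f i (z i) ∂(Measure.pi fun _ : ι => gaussianReal 0 1)
      = ∏ i, ∫ x, f i x ∂(gaussianReal 0 1) := by
  letI : MeasureSpace ℝ := ⟨gaussianReal 0 1⟩
  haveI : SigmaFinite (volume : Measure ℝ) := by
    show SigmaFinite (gaussianReal 0 1); infer_instance
  have hvol : (Measure.pi fun _ : ι => gaussianReal 0 1) = (volume : Measure (ι → ℝ)) :=
    (volume_pi).symm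
  rw [hvol]
  exact ⟨Integrable.fintype_prod (𝕜 := ℝ) hf, integral_fintype_prod_eq_prod f⟩

/-- Lower-tail concentration for nonnegatively weighted chi-square sums: for
independent standard Gaussians `z u` and nonnegative weights `σ u` with
`S = Σ σ_u² > 0`, for every `Δ > 0`,
`P(Σ σ_u z_u² ≤ Σ σ_u − 2Δ) ≤ exp(−Δ²/S)`. -/
theorem weighted_chisq_lower_tail
    {ι : Type*} [Fintype ι] [Nonempty ι]
    (σ : ι → ℝ) (hσ : ∀ u, 0 ≤ σ u) (hS : 0 < ∑ u, (σ u) ^ 2)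
    (Δ : ℝ) (hΔ : 0 < Δ) :
    (Measure.pi fun _ : ι => gaussianReal 0 1)
        {z : ι → ℝ | ∑ u, σ u * (z u) ^ 2 ≤ (∑ u, σ u) - 2 * Δ}
      ≤ ENNReal.ofReal (Real.exp (-(Δ ^ 2) / (∑ u, (σ u) ^ 2))) := by
  set S : ℝ := ∑ u, (σ u) ^ 2 with hSdef
  set l : ℝ := Δ / S with hldef
  have hl : 0 < l := div_pos hΔ hS
  set P : Measure (ι → ℝ) := Measure.pi fun _ : ι => gaussianReal 0 1 with hPdef
  haveI : IsProbabilityMeasure P := by rw [hPdef]; infer_instance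
  set X : (ι → ℝ) → ℝ := fun z => ∑ u, σ u * (z u) ^ 2 with hXdef
  -- rewrite exp(-l X) as a product
  have hprod : ∀ z : ι → ℝ, Real.exp (-l * X z)
      = ∏ u, Real.exp (-(l * σ u * (z u) ^ 2)) := by
    intro z
    rw [← Real.exp_sum]
    congr 1
    rw [hXdef]
    rw [Finset.mul_sum]
    exact Finset.sum_congr rfl fun u _ => by ring
  -- integrability per factor
  have hfint : ∀ u : ι, Integrable (fun x : ℝ => Real.exp (-(l * σ u * x ^ 2)))
      (gaussianReal 0 1) := by
    intro u
    have hm : Measurable (fun x : ℝ => Real.exp (-(l * σ u * x ^ 2))) := by fun_prop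
    refine (integrable_const (1 : ℝ)).mono' hm.aestronglyMeasurable (ae_of_all _ fun x => ?_)
    rw [Real.norm_eq_abs, abs_of_pos (Real.exp_pos _), Real.exp_le_one_iff]
    have : 0 ≤ l * σ u * x ^ 2 := mul_nonneg (mul_nonneg hl.le (hσ u)) (sq_nonneg x)
    linarith
  obtain ⟨hIntProd, hIntEq⟩ := my_pi_prod_int (fun u x => Real.exp (-(l * σ u * x ^ 2))) hfint
  have hint : Integrable (fun z : ι → ℝ => Real.exp (-l * X z)) P := by
    rw [hPdef]
    simpa only [hprod] using hIntProd
  -- Chernoff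
  have hch := measure_le_le_exp_mul_mgf (μ := P) (X := X) ((∑ u, σ u) - 2 * Δ)
    (t := -l) (by linarith) hint
  -- bound the mgf
  have hmgf : mgf X P (-l) ≤ Real.exp (∑ u, (-(l * σ u) + (l * σ u) ^ 2)) := by
    have h1 : mgf X P (-l) = ∏ u, ∫ x, Real.exp (-(l * σ u * x ^ 2)) ∂(gaussianReal 0 1) := by
      rw [mgf]
      calc ∫ z, Real.exp (-l * X z) ∂P
          = ∫ z, ∏ u, Real.exp (-(l * σ u * (z u) ^ 2)) ∂P := by
            exact integral_congr_ae (ae_of_all _ fun z => hprod z)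
        _ = _ := by rw [hPdef]; exact hIntEq
    rw [h1, Real.exp_sum]
    refine Finset.prod_le_prod (fun u _ => ?_) (fun u _ => ?_)
    · rw [my_gauss_int (l * σ u) (mul_nonneg hl.le (hσ u))]
      positivity
    · rw [my_gauss_int (l * σ u) (mul_nonneg hl.le (hσ u))]
      exact my_sqrt_le_exp (l * σ u) (mul_nonneg hl.le (hσ u))
  -- combine
  have hfinal : Real.exp (-(-l) * ((∑ u, σ u) - 2 * Δ)) * mgf X P (-l)
      ≤ Real.exp (-(Δ ^ 2) / S) := by
    calc Real.exp (-(-l) * ((∑ u, σ u) - 2 * Δ)) * mgf X P (-l)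
        ≤ Real.exp (l * ((∑ u, σ u) - 2 * Δ)) * Real.exp (∑ u, (-(l * σ u) + (l * σ u) ^ 2)) := by
          rw [neg_neg]
          exact mul_le_mul_of_nonneg_left hmgf (Real.exp_pos _).le
      _ = Real.exp (l * ((∑ u, σ u) - 2 * Δ) - l * ∑ u, σ u + l ^ 2 * S) := by
          rw [← Real.exp_add]
          congr 1
          have e1 : ∑ x : ι, -(l * σ x) = -(l * ∑ u, σ u) := by
            rw [Finset.mul_sum]; exact Finset.sum_neg_distrib (f := fun u => l * σ u)
          have e2 : ∑ x : ι, (l * σ x) ^ 2 = l ^ 2 * S := by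
            rw [hSdef, Finset.mul_sum]
            exact Finset.sum_congr rfl fun u _ => by ring
          rw [hSdef, Finset.sum_add_distrib, e1, e2, hSdef]
          ring
      _ = Real.exp (-(Δ ^ 2) / S) := by
          congr 1
          rw [hldef]
          field_simp
          ring
  have hne : P {z : ι → ℝ | X z ≤ (∑ u, σ u) - 2 * Δ} ≠ ⊤ := measure_ne_top _ _
  calc P {z : ι → ℝ | ∑ u, σ u * (z u) ^ 2 ≤ (∑ u, σ u) - 2 * Δ}
      = ENNReal.ofReal ((P {z : ι → ℝ | X z ≤ (∑ u, σ u) - 2 * Δ}).toReal) := by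
        rw [ENNReal.ofReal_toReal hne]
    _ ≤ ENNReal.ofReal (Real.exp (-(Δ ^ 2) / S)) :=
        ENNReal.ofReal_le_ofReal (hch.trans hfinal)
end

section
/- Let n ≥ 1, let σ : Fin n × Fin n → ℝ with σ_u ≥ 0 for all u and ν := Σ_u σ_u > 0, and let P₁ be the product measure on (Fin n × Fin n → ℝ) of independent Gaussians where coordinate u has law gaussianReal 0 (1 + σ_u). Then P₁{ x : Σ_u ((x u)² − 1) ≤ ν/2 } ≤ (2n² + 4ν + 2 Σ_u σ_u²) / (ν/2)². (This is the Type-II error bound for the global quadratic test of Theorem 2, item 1: under the alternative the centered quadratic statistic has mean ν and variance 2n² + 4ν + 2Σσ_u², and Chebyshev's inequality applies.) -/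
open ProbabilityTheory MeasureTheory Real

open MeasureTheory Real Set

lemma natq (q : ℕ) : (-1:ℝ) < q := lt_of_lt_of_le neg_one_lt_zero (Nat.cast_nonneg q)

lemma integral_pow_mul_exp_neg_mul_sq_Ioi {b : ℝ} (hb : 0 < b) (q : ℕ) :
    ∫ x in Ioi (0:ℝ), x ^ q * rexp (-b * x ^ 2) =
      b ^ (-((q:ℝ) + 1) / 2) * (1 / 2) * Gamma (((q:ℝ) + 1) / 2) := by
  rw [← integral_rpow_mul_exp_neg_mul_rpow two_pos (natq q) hb]
  refine setIntegral_congr_fun measurableSet_Ioi (fun x hx => ?_)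
  rw [← rpow_natCast x q, ← rpow_natCast x 2]
  norm_num

lemma integral_pow_mul_exp_neg_mul_sq {b : ℝ} (hb : 0 < b) (q : ℕ) (hq : Even q) :
    ∫ x : ℝ, x ^ q * rexp (-b * x ^ 2) =
      b ^ (-((q:ℝ) + 1) / 2) * Gamma (((q:ℝ) + 1) / 2) := by
  have hint : Integrable (fun x : ℝ => x ^ q * rexp (-b * x ^ 2)) := by
    have := integrable_rpow_mul_exp_neg_mul_sq hb (s := q) (natq q)
    refine this.congr (ae_of_all _ fun x => ?_)
    simp [rpow_natCast]
  have heven : ∀ x : ℝ, (-x) ^ q * rexp (-b * (-x) ^ 2) = x ^ q * rexp (-b * x ^ 2) := by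
    intro x; rw [hq.neg_pow, neg_pow, (by norm_num : Even 2).neg_one_pow, one_mul]
  have hs : ∫ x in Iic (0:ℝ), x ^ q * rexp (-b * x ^ 2)
      = ∫ x in Ioi (0:ℝ), x ^ q * rexp (-b * x ^ 2) := by
    rw [show Iic (0:ℝ) = Iic (-0) by norm_num,
      ← integral_comp_neg_Ioi 0 (fun x => x ^ q * rexp (-b * x ^ 2))]
    exact setIntegral_congr_fun measurableSet_Ioi (fun x _ => heven x)
  rw [← intervalIntegral.integral_Iic_add_Ioi (b := (0:ℝ)) hint.integrableOn hint.integrableOn, hs,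
    integral_pow_mul_exp_neg_mul_sq_Ioi hb]
  ring

open ProbabilityTheory
open scoped NNReal ENNReal

lemma integral_gaussianReal_eq {v : ℝ≥0} (hv : v ≠ 0) (g : ℝ → ℝ) :
    ∫ x, g x ∂(gaussianReal 0 v) = ∫ x, gaussianPDFReal 0 v x * g x := by
  rw [gaussianReal_of_var_ne_zero _ hv,
    show gaussianPDF 0 v = fun x => ((gaussianPDFReal 0 v x).toNNReal : ℝ≥0∞) from rfl,
    integral_withDensity_eq_integral_smul (measurable_gaussianPDFReal 0 v).real_toNNReal]
  congr 1; ext x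
  rw [NNReal.smul_def, smul_eq_mul, Real.coe_toNNReal _ (gaussianPDFReal_nonneg 0 v x)]

lemma moment_aux {v : ℝ≥0} (hv : v ≠ 0) (q : ℕ) (hq : Even q) :
    ∫ x, x ^ q ∂(gaussianReal 0 v) =
      (√(2 * π * v))⁻¹ *
        ((2 * (v:ℝ))⁻¹ ^ (-((q:ℝ) + 1) / 2) * Gamma (((q:ℝ) + 1) / 2)) := by
  have hvpos : (0:ℝ) < v := lt_of_le_of_ne v.coe_nonneg (by exact_mod_cast hv.symm)
  have hb : (0:ℝ) < (2 * (v:ℝ))⁻¹ := by positivity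
  rw [integral_gaussianReal_eq hv]
  have : ∀ x : ℝ, gaussianPDFReal 0 v x * x ^ q
      = (√(2 * π * v))⁻¹ * (x ^ q * rexp (-(2 * (v:ℝ))⁻¹ * x ^ 2)) := by
    intro x
    rw [gaussianPDFReal]
    have : -(x - 0) ^ 2 / (2 * v) = -(2 * (v:ℝ))⁻¹ * x ^ 2 := by
      field_simp
      ring
    rw [this]; ring
  simp_rw [this]
  rw [integral_const_mul, integral_pow_mul_exp_neg_mul_sq hb q hq]

lemma gamma_three_half : Gamma ((3:ℝ)/2) = √π / 2 := by
  rw [show (3:ℝ)/2 = 1/2 + 1 by norm_num, Gamma_add_one (by norm_num), Gamma_one_half_eq]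
  ring

lemma gamma_five_half : Gamma ((5:ℝ)/2) = 3 * √π / 4 := by
  rw [show (5:ℝ)/2 = 3/2 + 1 by norm_num, Gamma_add_one (by norm_num), gamma_three_half]
  ring

lemma integral_sq_gaussianReal {v : ℝ≥0} (hv : v ≠ 0) :
    ∫ x, x ^ 2 ∂(gaussianReal 0 v) = v := by
  have hvpos : (0:ℝ) < v := lt_of_le_of_ne v.coe_nonneg (by exact_mod_cast hv.symm)
  have ha : (0:ℝ) < 2 * v := by positivity
  rw [moment_aux hv 2 (by norm_num)]
  have h1 : ((2*(v:ℝ))⁻¹) ^ (-(((2:ℕ):ℝ)+1)/2) = (2*(v:ℝ)) ^ ((3:ℝ)/2) := by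
    rw [show (-(((2:ℕ):ℝ)+1)/2) = -((3:ℝ)/2) by norm_num, inv_rpow ha.le,
      rpow_neg ha.le, inv_inv]
  have h2 : √(2*π*(v:ℝ)) = (2*(v:ℝ))^((1:ℝ)/2) * √π := by
    rw [show 2*π*(v:ℝ) = (2*(v:ℝ))*π by ring, sqrt_mul ha.le, sqrt_eq_rpow]
  have h3 : (2*(v:ℝ))^((3:ℝ)/2) = (2*(v:ℝ))^((1:ℝ)/2) * (2*(v:ℝ)) := by
    rw [show (3:ℝ)/2 = 1/2 + 1 by norm_num, rpow_add ha, rpow_one]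
  have h4 : (2*(v:ℝ))^((1:ℝ)/2) ≠ 0 := (rpow_pos_of_pos ha _).ne'
  have h5 : √π ≠ 0 := (sqrt_pos.mpr pi_pos).ne'
  rw [h1, h2, h3, show ((((2:ℕ):ℝ))+1)/2 = (3:ℝ)/2 by norm_num, gamma_three_half]
  field_simp

lemma integral_pow4_gaussianReal {v : ℝ≥0} (hv : v ≠ 0) :
    ∫ x, x ^ 4 ∂(gaussianReal 0 v) = 3 * (v:ℝ) ^ 2 := by
  have hvpos : (0:ℝ) < v := lt_of_le_of_ne v.coe_nonneg (by exact_mod_cast hv.symm)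
  have ha : (0:ℝ) < 2 * v := by positivity
  rw [moment_aux hv 4 (by decide)]
  have h1 : ((2*(v:ℝ))⁻¹) ^ (-(((4:ℕ):ℝ)+1)/2) = (2*(v:ℝ)) ^ ((5:ℝ)/2) := by
    rw [show (-(((4:ℕ):ℝ)+1)/2) = -((5:ℝ)/2) by norm_num, inv_rpow ha.le,
      rpow_neg ha.le, inv_inv]
  have h2 : √(2*π*(v:ℝ)) = (2*(v:ℝ))^((1:ℝ)/2) * √π := by
    rw [show 2*π*(v:ℝ) = (2*(v:ℝ))*π by ring, sqrt_mul ha.le, sqrt_eq_rpow]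
  have h3 : (2*(v:ℝ))^((5:ℝ)/2) = (2*(v:ℝ))^((1:ℝ)/2) * (2*(v:ℝ))^2 := by
    rw [show (5:ℝ)/2 = 1/2 + 2 by norm_num, rpow_add ha, rpow_two]
  have h4 : (2*(v:ℝ))^((1:ℝ)/2) ≠ 0 := (rpow_pos_of_pos ha _).ne'
  have h5 : √π ≠ 0 := (sqrt_pos.mpr pi_pos).ne'
  rw [h1, h2, h3, show ((((4:ℕ):ℝ))+1)/2 = (5:ℝ)/2 by norm_num, gamma_five_half]
  field_simp
  ring

lemma integrable_pow_gaussianReal {v : ℝ≥0} (hv : v ≠ 0) (q : ℕ) (hq : Even q) :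
    Integrable (fun x : ℝ => x ^ q) (gaussianReal 0 v) := by
  have hvpos : (0:ℝ) < v := lt_of_le_of_ne v.coe_nonneg (by exact_mod_cast hv.symm)
  have hb : (0:ℝ) < (2 * (v:ℝ))⁻¹ := by positivity
  rw [gaussianReal_of_var_ne_zero _ hv,
    show gaussianPDF 0 v = fun x => ((gaussianPDFReal 0 v x).toNNReal : ℝ≥0∞) from rfl,
    integrable_withDensity_iff_integrable_smul (measurable_gaussianPDFReal 0 v).real_toNNReal]
  have heq : ∀ x : ℝ, ((gaussianPDFReal 0 v x).toNNReal : ℝ) • (x ^ q)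
      = (√(2 * π * v))⁻¹ * (x ^ q * rexp (-(2 * (v:ℝ))⁻¹ * x ^ 2)) := by
    intro x
    rw [smul_eq_mul, Real.coe_toNNReal _ (gaussianPDFReal_nonneg 0 v x), gaussianPDFReal]
    have : -(x - 0) ^ 2 / (2 * v) = -(2 * (v:ℝ))⁻¹ * x ^ 2 := by field_simp; ring
    rw [this]; ring
  refine Integrable.congr ?_ (ae_of_all _ fun x => (heq x).symm)
  have := integrable_rpow_mul_exp_neg_mul_sq hb (s := q) (natq q)
  refine ((this.congr (ae_of_all _ fun x => ?_)).const_mul _)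
  simp [rpow_natCast]

lemma memℒp_sq_sub_one {v : ℝ≥0} (hv : v ≠ 0) :
    MemLp (fun y : ℝ => y ^ 2 - 1) 2 (gaussianReal 0 v) := by
  have hinteg : Integrable (fun y : ℝ => (y ^ 2 - 1) ^ 2) (gaussianReal 0 v) := by
    have : (fun y : ℝ => (y ^ 2 - 1) ^ 2) = fun y : ℝ => y ^ 4 - 2 * y ^ 2 + 1 := by
      ext y; ring
    rw [this]
    exact (((integrable_pow_gaussianReal hv 4 (by decide)).sub
      ((integrable_pow_gaussianReal hv 2 (by decide)).const_mul 2)).add (integrable_const 1))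
  have hmeas : AEStronglyMeasurable (fun y : ℝ => y ^ 2 - 1) (gaussianReal 0 v) :=
    (measurable_id.pow_const 2).sub_const 1 |>.aestronglyMeasurable
  rw [memLp_two_iff_integrable_sq hmeas]
  exact hinteg.congr (ae_of_all _ fun x => rfl)

lemma integral_sq_sub_one {v : ℝ≥0} (hv : v ≠ 0) :
    ∫ y, (y ^ 2 - 1) ∂(gaussianReal 0 v) = (v : ℝ) - 1 := by
  rw [integral_sub (integrable_pow_gaussianReal hv 2 (by decide)) (integrable_const 1),
    integral_sq_gaussianReal hv, integral_const]
  simp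

lemma variance_sq_sub_one {v : ℝ≥0} (hv : v ≠ 0) :
    ProbabilityTheory.variance (fun y : ℝ => y ^ 2 - 1) (gaussianReal 0 v) = 2 * (v:ℝ) ^ 2 := by
  rw [ProbabilityTheory.variance_eq_sub (memℒp_sq_sub_one hv)]
  have h1 : ∫ y, ((fun y : ℝ => y ^ 2 - 1) ^ 2) y ∂(gaussianReal 0 v)
      = 3 * (v:ℝ)^2 - 2 * v + 1 := by
    have : ∀ y : ℝ, ((fun y : ℝ => y ^ 2 - 1) ^ 2) y = y ^ 4 - 2 * y ^ 2 + 1 := by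
      intro y; simp [Pi.pow_apply]; ring
    have hI4 := integrable_pow_gaussianReal hv 4 (by decide)
    have hI2 := (integrable_pow_gaussianReal hv 2 (by decide)).const_mul 2
    have hI42 : Integrable (fun a : ℝ => a ^ 4 - 2 * a ^ 2) (gaussianReal 0 v) := hI4.sub hI2
    rw [integral_congr_ae (ae_of_all _ this),
      integral_add hI42 (integrable_const 1),
      integral_sub hI4 hI2,
      integral_const_mul, integral_pow4_gaussianReal hv, integral_sq_gaussianReal hv,
      integral_const]
    simp
  rw [h1, integral_sq_sub_one hv]
  ring

section Pi
variable {ι : Type*} [Fintype ι] [DecidableEq ι] (μ : ι → Measure ℝ)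
  [∀ i, IsProbabilityMeasure (μ i)]

lemma pi_map_eval (i : ι) : (Measure.pi μ).map (Function.eval i) = μ i := by
  ext s hs
  rw [Measure.map_apply (measurable_pi_apply i) hs]
  have hset : Function.eval i ⁻¹' s
      = Set.pi Set.univ (Function.update (fun _ => (Set.univ : Set ℝ)) i s) := by
    ext x
    constructor
    · intro hx k _
      rcases eq_or_ne k i with rfl | hk
      · simpa using hx
      · simp [Function.update_of_ne hk]
    · intro hx
      have := hx i (Set.mem_univ i)
      simpa using this
  rw [hset, Measure.pi_pi]
  rw [Finset.prod_eq_single i (fun j _ hj => by simp [Function.update_of_ne hj])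
    (fun h => absurd (Finset.mem_univ i) h)]
  simp

lemma indepFun_eval_pi {i j : ι} (hij : i ≠ j) :
    ProbabilityTheory.IndepFun (Function.eval i) (Function.eval j) (Measure.pi μ) := by
  rw [ProbabilityTheory.indepFun_iff_measure_inter_preimage_eq_mul]
  intro s t hs ht
  have hset : Function.eval i ⁻¹' s ∩ Function.eval j ⁻¹' t
      = Set.pi Set.univ (Function.update (Function.update (fun _ => (Set.univ : Set ℝ)) i s) j t) := by
    ext x
    constructor
    · rintro ⟨hxs, hxt⟩ k _
      rcases eq_or_ne k j with rfl | hkj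
      · simpa using hxt
      rcases eq_or_ne k i with rfl | hki
      · rw [Function.update_of_ne hkj, Function.update_self]; exact hxs
      · simp [Function.update_of_ne hkj, Function.update_of_ne hki]
    · intro hx
      have h1 := hx i (Set.mem_univ i)
      have h2 := hx j (Set.mem_univ j)
      rw [Function.update_of_ne hij, Function.update_self] at h1
      rw [Function.update_self] at h2
      exact ⟨h1, h2⟩
  have hprod : ∀ k, k ∉ ({i, j} : Finset ι) →
      μ k (Function.update (Function.update (fun _ => (Set.univ : Set ℝ)) i s) j t k) = 1 := by
    intro k hk
    simp only [Finset.mem_insert, Finset.mem_singleton, not_or] at hk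
    rw [Function.update_of_ne hk.2, Function.update_of_ne hk.1]
    simp
  rw [hset, Measure.pi_pi,
    ← Finset.prod_subset (Finset.subset_univ ({i, j} : Finset ι)) (fun k _ hk => hprod k hk),
    Finset.prod_pair hij, Function.update_of_ne hij, Function.update_self, Function.update_self,
    show (Measure.pi μ) (Function.eval i ⁻¹' s) = μ i s from by
      rw [← pi_map_eval μ i, Measure.map_apply (measurable_pi_apply i) hs],
    show (Measure.pi μ) (Function.eval j ⁻¹' t) = μ j t from by
      rw [← pi_map_eval μ j, Measure.map_apply (measurable_pi_apply j) ht]]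

end Pi

lemma variance_comp {Ω : Type*} [MeasurableSpace Ω] {P : Measure Ω} [IsProbabilityMeasure P]
    {ν : Measure ℝ} [IsProbabilityMeasure ν] {f : Ω → ℝ} (hf : Measurable f)
    (hmap : P.map f = ν) {g : ℝ → ℝ} (hg : Measurable g) (hgℒ : MemLp g 2 ν) :
    ProbabilityTheory.variance (g ∘ f) P = ProbabilityTheory.variance g ν := by
  have hgf : MemLp (g ∘ f) 2 P := by
    refine (memLp_map_measure_iff ?_ hf.aemeasurable).mp (by rwa [hmap])
    rw [hmap]; exact hg.aestronglyMeasurable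
  rw [ProbabilityTheory.variance_eq_sub hgf, ProbabilityTheory.variance_eq_sub hgℒ, ← hmap]
  simp only [Pi.pow_apply, Function.comp_apply]
  rw [integral_map hf.aemeasurable hg.aestronglyMeasurable,
    integral_map hf.aemeasurable (hg.pow_const 2).aestronglyMeasurable]


/-- Type-II error bound for the global quadratic test: under the alternative
product Gaussian measure with variances `1 + σ_u`, the centered quadratic
statistic falls below `ν/2` with probability at most
`(2n² + 4ν + 2Σσ_u²)/(ν/2)²` (Chebyshev), where `ν = Σ σ_u`. -/
theorem quad_test_typeII_bound (n : ℕ) (hn : 1 ≤ n)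
    (σ : Fin n × Fin n → ℝ) (hσ : ∀ u, 0 ≤ σ u) (hν : 0 < ∑ u, σ u) :
    (Measure.pi fun u : Fin n × Fin n => gaussianReal 0 ((1 + σ u).toNNReal))
        {x : Fin n × Fin n → ℝ | ∑ u, ((x u) ^ 2 - 1) ≤ (∑ u, σ u) / 2}
      ≤ ENNReal.ofReal
          ((2 * (n : ℝ) ^ 2 + 4 * ∑ u, σ u + 2 * ∑ u, (σ u) ^ 2)
            / ((∑ u, σ u) / 2) ^ 2) := by
  classical
  set ν := ∑ u, σ u with hνdef
  set v : Fin n × Fin n → ℝ≥0 := fun u => (1 + σ u).toNNReal with hvdef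
  set P := Measure.pi fun u : Fin n × Fin n => gaussianReal 0 (v u) with hP
  have hvpos : ∀ u, (0:ℝ) < 1 + σ u := fun u => by have := hσ u; linarith
  have hvne : ∀ u, v u ≠ 0 := fun u => by
    simp only [hvdef, ne_eq, Real.toNNReal_eq_zero, not_le]; exact hvpos u
  have hvcoe : ∀ u, ((v u : ℝ≥0) : ℝ) = 1 + σ u := fun u =>
    Real.coe_toNNReal _ (hvpos u).le
  set g : ℝ → ℝ := fun y => y ^ 2 - 1 with hgdef
  have hg : Measurable g := (measurable_id.pow_const 2).sub_const 1
  set X : Fin n × Fin n → (Fin n × Fin n → ℝ) → ℝ := fun u => g ∘ Function.eval u with hXdef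
  have hmap : ∀ u, P.map (Function.eval u) = gaussianReal 0 (v u) := fun u =>
    pi_map_eval _ u
  have hMem : ∀ u, MemLp (X u) 2 P := by
    intro u
    refine (memLp_map_measure_iff ?_ (measurable_pi_apply u).aemeasurable).mp ?_
    · rw [hmap u]; exact hg.aestronglyMeasurable
    · rw [hmap u]; exact memℒp_sq_sub_one (hvne u)
  have hInt : ∀ u, ∫ x, X u x ∂P = σ u := by
    intro u
    have : ∫ x, X u x ∂P = ∫ y, g y ∂(P.map (Function.eval u)) := by
      rw [integral_map (measurable_pi_apply u).aemeasurable hg.aestronglyMeasurable]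
      rfl
    rw [this, hmap u, integral_sq_sub_one (hvne u), hvcoe u]
    ring
  have hVar : ∀ u, ProbabilityTheory.variance (X u) P = 2 * (1 + σ u) ^ 2 := by
    intro u
    rw [hXdef]
    rw [variance_comp (measurable_pi_apply u) (hmap u) hg (memℒp_sq_sub_one (hvne u)),
      variance_sq_sub_one (hvne u), hvcoe u]
  set T : (Fin n × Fin n → ℝ) → ℝ := ∑ u, X u with hTdef
  have hTapp : ∀ x, T x = ∑ u, ((x u) ^ 2 - 1) := by
    intro x; rw [hTdef, Finset.sum_apply]; rfl
  have hTMem : MemLp T 2 P := memLp_finsetSum' _ (fun u _ => hMem u)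
  have hTmean : ∫ x, T x ∂P = ν := by
    rw [hTdef]
    have : ∫ x, (∑ u, X u) x ∂P = ∫ x, ∑ u, X u x ∂P := by
      congr 1; ext x; rw [Finset.sum_apply]
    rw [this, integral_finset_sum _ (fun u _ => (hMem u).integrable one_le_two)]
    exact Finset.sum_congr rfl (fun u _ => hInt u)
  have hTvar : ProbabilityTheory.variance T P
      = 2 * (n : ℝ) ^ 2 + 4 * ν + 2 * ∑ u, (σ u) ^ 2 := by
    rw [hTdef, ProbabilityTheory.IndepFun.variance_sum (fun u _ => hMem u)
      (fun i _ j _ hij => ((indepFun_eval_pi _ hij).comp hg hg))]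
    have : ∀ u, ProbabilityTheory.variance (X u) P = 2 + 4 * σ u + 2 * (σ u) ^ 2 := by
      intro u; rw [hVar u]; ring
    rw [Finset.sum_congr rfl (fun u _ => this u)]
    rw [Finset.sum_add_distrib, Finset.sum_add_distrib, Finset.sum_const, ← Finset.mul_sum,
      ← Finset.mul_sum, Finset.card_univ]
    simp only [Fintype.card_prod, Fintype.card_fin, nsmul_eq_mul]
    push_cast
    ring
  have hc : (0:ℝ) < ν / 2 := by positivity
  have hcheb := ProbabilityTheory.meas_ge_le_variance_div_sq (μ := P) hTMem hc
  have hsub : {x : Fin n × Fin n → ℝ | ∑ u, ((x u) ^ 2 - 1) ≤ ν / 2}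
      ⊆ {x | ν / 2 ≤ |T x - ∫ y, T y ∂P|} := by
    intro x hx
    simp only [Set.mem_setOf_eq] at hx ⊢
    rw [hTmean]
    have h1 : ν - T x ≤ |T x - ν| := by rw [abs_sub_comm]; exact le_abs_self _
    have h2 : T x ≤ ν / 2 := by rw [hTapp]; exact hx
    linarith
  calc P {x : Fin n × Fin n → ℝ | ∑ u, ((x u) ^ 2 - 1) ≤ ν / 2}
      ≤ P {x | ν / 2 ≤ |T x - ∫ y, T y ∂P|} := measure_mono hsub
    _ ≤ ENNReal.ofReal (ProbabilityTheory.variance T P / (ν / 2) ^ 2) := hcheb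
    _ = _ := by rw [hTvar]
end

section
/- Let ι be a nonempty finite type, let σ : ι → ℝ with σ_u ≥ 0 for all u and S := Σ_u σ_u² > 0, define KL := (1/2) Σ_{u∈ι} ( σ_u − log(1+σ_u) ) and the statistic L(x) := Σ_{u∈ι} (1/2)·( (σ_u/(1+σ_u))·(x u)² − log(1+σ_u) ). Let P₁ be the product measure on (ι → ℝ) of independent Gaussians where coordinate u has law gaussianReal 0 (1+σ_u). Then for every τ < KL, P₁{ x : L(x) ≤ τ } ≤ exp(−(KL − τ)²/S). (This is the Type-II error bound for the variance-shift scan test, Theorem 2 items 2–3, applied to the planted block carrying template σ.) -/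
open ProbabilityTheory MeasureTheory Real

lemma vsb_log_one_add {b : ℝ} (hb : 0 ≤ b) : b - b ^ 2 / 2 ≤ Real.log (1 + b) := by
  have key : MonotoneOn (fun x : ℝ => Real.log (1 + x) - x + x ^ 2 / 2) (Set.Ici 0) := by
    have hd : ∀ x ∈ Set.Ioi (0:ℝ), HasDerivAt (fun x : ℝ => Real.log (1 + x) - x + x ^ 2 / 2)
        ((1 + x)⁻¹ - 1 + x) x := by
      intro x hx
      have hx0 : (0:ℝ) < x := hx
      have h1 : (0:ℝ) < 1 + x := by linarith
      have : HasDerivAt (fun x : ℝ => 1 + x) 1 x := (hasDerivAt_id x).const_add 1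
      have hlog : HasDerivAt (fun x : ℝ => Real.log (1 + x)) (1 / (1 + x)) x := by
        simpa using this.log h1.ne'
      have hsq : HasDerivAt (fun x : ℝ => x ^ 2 / 2) x x := by
        simpa using (hasDerivAt_pow 2 x).div_const 2
      have := (hlog.sub (hasDerivAt_id x)).add hsq
      rw [one_div] at this
      exact this
    refine monotoneOn_of_deriv_nonneg (convex_Ici 0) ?_ ?_ ?_
    · have : ContinuousOn (fun x : ℝ => Real.log (1 + x)) (Set.Ici 0) := by
        refine ContinuousOn.log (by fun_prop) ?_
        intro x hx; have : (0:ℝ) ≤ x := hx; positivity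
      fun_prop (disch := intro x hx; have : (0:ℝ) ≤ x := hx; positivity)
    · rw [interior_Ici]
      intro x hx
      exact (hd x hx).differentiableAt.differentiableWithinAt
    · rw [interior_Ici]
      intro x hx
      rw [(hd x hx).deriv]
      have hx0 : (0:ℝ) < x := hx
      have h1 : (0:ℝ) < 1 + x := by linarith
      have heq : (1 + x)⁻¹ - 1 + x = x ^ 2 / (1 + x) := by field_simp; ring
      rw [heq]
      positivity
  have h0 : (0:ℝ) ∈ Set.Ici (0:ℝ) := Set.mem_Ici.mpr le_rfl
  have hb' : b ∈ Set.Ici (0:ℝ) := Set.mem_Ici.mpr hb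
  have := key h0 hb' hb
  simp only [add_zero, Real.log_one] at this
  nlinarith [this]

lemma vsb_gauss_int {c : ℝ} (hc : 0 ≤ c) {w : NNReal} (hw : w ≠ 0) :
    ∫ y, Real.exp (-(c * y ^ 2)) ∂(gaussianReal 0 w) = (Real.sqrt (1 + 2 * c * w))⁻¹ := by
  have hw0 : (0:ℝ) < (w:ℝ) := by
    have := hw; positivity
  rw [gaussianReal_of_var_ne_zero 0 hw]
  have hmeas : Measurable fun y : ℝ => (gaussianPDFReal 0 w y).toNNReal :=
    (measurable_gaussianPDFReal 0 w).real_toNNReal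
  have hdens : (volume : Measure ℝ).withDensity (gaussianPDF 0 w)
      = (volume : Measure ℝ).withDensity
        (fun y => ((gaussianPDFReal 0 w y).toNNReal : ENNReal)) := rfl
  rw [hdens, integral_withDensity_eq_integral_smul hmeas]
  set b : ℝ := c + (2 * (w:ℝ))⁻¹ with hb
  have hbpos : 0 < b := by positivity
  have h1 : ∀ y : ℝ, (gaussianPDFReal 0 w y).toNNReal • Real.exp (-(c * y ^ 2))
      = (Real.sqrt (2 * π * w))⁻¹ * Real.exp (-b * y ^ 2) := by
    intro y
    have hwne : (w:ℝ) ≠ 0 := hw0.ne'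
    rw [NNReal.smul_def, Real.coe_toNNReal _ (gaussianPDFReal_nonneg 0 w y),
      gaussianPDFReal_def]
    simp only [smul_eq_mul]
    rw [mul_assoc, ← Real.exp_add, hb]
    congr 1
    field_simp
    ring
  simp_rw [h1]
  rw [integral_const_mul, integral_gaussian]
  have hwne : (w:ℝ) ≠ 0 := hw0.ne'
  have hkey : π / b / (2 * π * (w:ℝ)) = (1 + 2 * c * (w:ℝ))⁻¹ := by
    rw [hb]
    rw [show c + (2 * (w:ℝ))⁻¹ = (2 * c * w + 1) / (2 * w) by field_simp]
    rw [div_div_eq_mul_div, div_div]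
    rw [inv_eq_one_div]
    rw [div_eq_div_iff (by positivity) (by positivity)]
    ring
  rw [mul_comm, ← div_eq_mul_inv, ← Real.sqrt_div (by positivity : (0:ℝ) ≤ π / b),
    hkey, Real.sqrt_inv]

lemma vsb_pi_preimage {ι : Type*} [Fintype ι] (μ : ι → Measure ℝ)
    [∀ i, IsProbabilityMeasure (μ i)] (i : ι) {s : Set ℝ} (hs : MeasurableSet s) :
    Measure.pi μ ((fun x : ι → ℝ => x i) ⁻¹' s) = μ i s := by
  classical
  rw [show (fun x : ι → ℝ => x i) ⁻¹' s = Function.eval i ⁻¹' s from rfl,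
    ← Set.univ_pi_update_univ, Measure.pi_pi]
  rw [Finset.prod_eq_single i (fun j _ hj => by simp [Function.update_of_ne hj])
    (by simp)]
  simp

lemma vsb_map_eval {ι : Type*} [Fintype ι] (μ : ι → Measure ℝ)
    [∀ i, IsProbabilityMeasure (μ i)] (i : ι) :
    (Measure.pi μ).map (fun x : ι → ℝ => x i) = μ i :=
  Measure.ext fun s hs => by
    rw [Measure.map_apply (measurable_pi_apply i) hs, vsb_pi_preimage μ i hs]

lemma vsb_iIndep {ι : Type*} [Fintype ι] (μ : ι → Measure ℝ)
    [∀ i, IsProbabilityMeasure (μ i)] :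
    iIndepFun (fun i (x : ι → ℝ) => x i) (Measure.pi μ) := by
  classical
  rw [iIndepFun_iff_measure_inter_preimage_eq_mul]
  intro S sets h_meas
  have h1 : (⋂ i ∈ S, (fun x : ι → ℝ => x i) ⁻¹' sets i)
      = Set.pi Set.univ (fun i => if i ∈ S then sets i else Set.univ) := by
    ext x
    simp only [Set.mem_iInter, Set.mem_preimage, Set.mem_pi, Set.mem_univ, true_implies]
    constructor
    · intro h i
      by_cases hi : i ∈ S
      · simpa [hi] using h i hi
      · simp [hi]
    · intro h i hi
      simpa [hi] using h i
  calc Measure.pi μ (⋂ i ∈ S, (fun x : ι → ℝ => x i) ⁻¹' sets i)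
      = ∏ i, μ i (if i ∈ S then sets i else Set.univ) := by rw [h1, Measure.pi_pi]
    _ = ∏ i ∈ S, μ i (if i ∈ S then sets i else Set.univ) :=
        (Finset.prod_subset (Finset.subset_univ S) (fun x _ hx => by simp [hx])).symm
    _ = ∏ i ∈ S, Measure.pi μ ((fun x : ι → ℝ => x i) ⁻¹' sets i) :=
        Finset.prod_congr rfl fun i hi => by
          rw [if_pos hi, vsb_pi_preimage μ i (h_meas i hi)]

/-- Type-II error bound for the variance-shift scan test on the planted block
carrying template `σ`: under the alternative product measure with variances
`1 + σ_u`, the log-likelihood-ratio statistic `L` falls below `τ < KL` with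
probability at most `exp(−(KL − τ)²/S)` where `S = Σ σ_u²`. -/
theorem variance_scan_typeII_bound
    {ι : Type*} [Fintype ι] [Nonempty ι]
    (σ : ι → ℝ) (hσ : ∀ u, 0 ≤ σ u) (hS : 0 < ∑ u, (σ u) ^ 2)
    (KL : ℝ) (hKL : KL = (1 / 2) * ∑ u, (σ u - Real.log (1 + σ u)))
    (L : (ι → ℝ) → ℝ)
    (hL : ∀ x, L x = ∑ u, (1 / 2) * ((σ u / (1 + σ u)) * (x u) ^ 2
        - Real.log (1 + σ u)))
    (τ : ℝ) (hτ : τ < KL) :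
    (Measure.pi fun u : ι => gaussianReal 0 ((1 + σ u).toNNReal))
        {x : ι → ℝ | L x ≤ τ}
      ≤ ENNReal.ofReal (Real.exp (-(KL - τ) ^ 2 / (∑ u, (σ u) ^ 2))) := by
  classical
  set S : ℝ := ∑ u, (σ u) ^ 2 with hSdef
  set s : ℝ := 2 * (KL - τ) / S with hsdef
  have hKLτ : 0 < KL - τ := sub_pos.mpr hτ
  have hs : 0 < s := by rw [hsdef]; positivity
  have h1σ : ∀ u, (0:ℝ) < 1 + σ u := fun u => by linarith [hσ u]
  have h1sσ : ∀ u, (0:ℝ) < 1 + s * σ u := fun u => by nlinarith [hσ u, hs]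
  set μ : ι → Measure ℝ := fun u => gaussianReal 0 ((1 + σ u).toNNReal) with hμdef
  haveI : ∀ u, IsProbabilityMeasure (μ u) := fun u => by
    rw [hμdef]; infer_instance
  set P : Measure (ι → ℝ) := Measure.pi μ with hPdef
  haveI : IsProbabilityMeasure P := by rw [hPdef]; infer_instance
  set X : ι → (ι → ℝ) → ℝ := fun u x =>
    (1 / 2) * ((σ u / (1 + σ u)) * (x u) ^ 2 - Real.log (1 + σ u)) with hXdef
  have hXmeas : ∀ u, Measurable (X u) := by
    intro u
    apply Measurable.const_mul
    exact (((measurable_pi_apply u).pow_const 2).const_mul _).sub measurable_const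
  have hLX : L = ∑ u, X u := by
    funext x
    rw [hL x, Finset.sum_apply]
  -- per-coordinate mgf
  have hmgf : ∀ u, mgf (X u) P (-s)
      = Real.exp (s * Real.log (1 + σ u) / 2 - Real.log (1 + s * σ u) / 2) := by
    intro u
    have hwR : (((1 + σ u).toNNReal : NNReal) : ℝ) = 1 + σ u :=
      Real.coe_toNNReal _ (h1σ u).le
    have hwne : ((1 + σ u).toNNReal : NNReal) ≠ 0 := by
      intro h
      have := hwR
      rw [h] at this
      simp at this
      linarith [h1σ u]
    set c : ℝ := s * (σ u / (1 + σ u)) / 2 with hcdef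
    have hc : 0 ≤ c := by
      have := (h1σ u).le
      have h2 := hσ u
      rw [hcdef]
      positivity
    have hg : ∀ y : ℝ, Real.exp (-s * ((1 / 2) * ((σ u / (1 + σ u)) * y ^ 2
        - Real.log (1 + σ u))))
        = Real.exp (s * Real.log (1 + σ u) / 2) * Real.exp (-(c * y ^ 2)) := by
      intro y
      rw [← Real.exp_add]
      congr 1
      rw [hcdef]
      ring
    have hgmeas : Measurable (fun y : ℝ => Real.exp (-s * ((1 / 2) * ((σ u / (1 + σ u)) * y ^ 2
        - Real.log (1 + σ u))))) := by
      apply Measurable.exp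
      apply Measurable.const_mul
      apply Measurable.const_mul
      exact ((measurable_id.pow_const 2).const_mul _).sub measurable_const
    have hmap : mgf (X u) P (-s)
        = ∫ y, Real.exp (-s * ((1 / 2) * ((σ u / (1 + σ u)) * y ^ 2
            - Real.log (1 + σ u)))) ∂(μ u) := by
      rw [mgf, ← vsb_map_eval μ u,
        integral_map (measurable_pi_apply u).aemeasurable hgmeas.aestronglyMeasurable]
    rw [hmap]
    simp_rw [hg]
    rw [integral_const_mul, vsb_gauss_int hc hwne, hwR]
    have h2c : 1 + 2 * c * (1 + σ u) = 1 + s * σ u := by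
      rw [hcdef]
      field_simp [(h1σ u).ne']
    rw [h2c]
    have hsqrt : Real.sqrt (1 + s * σ u)
        = Real.exp (Real.log (1 + s * σ u) / 2) := by
      rw [← Real.exp_log (Real.sqrt_pos.mpr (h1sσ u)), Real.log_sqrt (h1sσ u).le]
    rw [hsqrt, ← Real.exp_neg, ← Real.exp_add]
    congr 1
  -- integrability
  have h_int : ∀ u, Integrable (fun x => Real.exp (-s * X u x)) P := by
    intro u
    refine Integrable.mono' (integrable_const (Real.exp (s * Real.log (1 + σ u) / 2)))
      (((hXmeas u).const_mul (-s)).exp.aestronglyMeasurable) (ae_of_all _ fun x => ?_)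
    rw [Real.norm_eq_abs, abs_of_pos (Real.exp_pos _)]
    apply Real.exp_le_exp.mpr
    have ha : 0 ≤ σ u / (1 + σ u) := div_nonneg (hσ u) (h1σ u).le
    have hsq : (0:ℝ) ≤ (x u) ^ 2 := sq_nonneg _
    rw [hXdef]
    simp only
    nlinarith [mul_nonneg ha hsq, hs.le]
  have hXind : iIndepFun X P := by
    have hgm : ∀ u : ι, Measurable (fun y : ℝ =>
        (1 / 2) * ((σ u / (1 + σ u)) * y ^ 2 - Real.log (1 + σ u))) := fun u => by
      apply Measurable.const_mul
      exact ((measurable_id.pow_const 2).const_mul _).sub measurable_const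
    exact (vsb_iIndep μ).comp _ hgm
  have h_intL : Integrable (fun x => Real.exp (-s * L x)) P := by
    rw [hLX]
    exact hXind.integrable_exp_mul_sum hXmeas (fun u _ => h_int u)
  -- Chernoff
  have hch := measure_le_le_exp_mul_mgf (μ := P) (X := L) τ (neg_nonpos.mpr hs.le) h_intL
  have hmgfL : mgf L P (-s) = ∏ u, mgf (X u) P (-s) := by
    rw [hLX]
    exact hXind.mgf_sum hXmeas Finset.univ
  rw [hmgfL] at hch
  simp_rw [hmgf] at hch
  rw [← Real.exp_sum] at hch
  -- exponent bound
  have hkey : s * τ + ∑ u, (s * Real.log (1 + σ u) / 2 - Real.log (1 + s * σ u) / 2)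
      ≤ -(KL - τ) ^ 2 / S := by
    have h2 : ∑ u, (s * Real.log (1 + σ u) / 2 - s * σ u / 2) = -(s * KL) := by
      calc ∑ u, (s * Real.log (1 + σ u) / 2 - s * σ u / 2)
          = ∑ u, (-(s * (1 / 2)) * (σ u - Real.log (1 + σ u))) :=
            Finset.sum_congr rfl fun u _ => by ring
        _ = -(s * (1 / 2)) * ∑ u, (σ u - Real.log (1 + σ u)) := by
            rw [Finset.mul_sum]
        _ = -(s * KL) := by rw [hKL]; ring
    have h3 : ∑ u, (s * Real.log (1 + σ u) / 2 - Real.log (1 + s * σ u) / 2)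
        = -(s * KL) + ∑ u, (s * σ u / 2 - Real.log (1 + s * σ u) / 2) := by
      rw [← h2, ← Finset.sum_add_distrib]
      exact Finset.sum_congr rfl fun u _ => by ring
    have h4 : ∑ u, (s * σ u / 2 - Real.log (1 + s * σ u) / 2)
        ≤ s ^ 2 / 4 * S := by
      calc ∑ u, (s * σ u / 2 - Real.log (1 + s * σ u) / 2)
          ≤ ∑ u, s ^ 2 / 4 * (σ u) ^ 2 := by
            refine Finset.sum_le_sum fun u _ => ?_
            have hb : 0 ≤ s * σ u := mul_nonneg hs.le (hσ u)
            have := vsb_log_one_add hb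
            nlinarith [this]
        _ = s ^ 2 / 4 * S := by rw [hSdef, Finset.mul_sum]
    have h5 : -(s * (KL - τ)) + s ^ 2 / 4 * S = -(KL - τ) ^ 2 / S := by
      rw [hsdef]
      field_simp
      ring
    calc s * τ + ∑ u, (s * Real.log (1 + σ u) / 2 - Real.log (1 + s * σ u) / 2)
        = -(s * (KL - τ)) + ∑ u, (s * σ u / 2 - Real.log (1 + s * σ u) / 2) := by
          rw [h3]; ring
      _ ≤ -(s * (KL - τ)) + s ^ 2 / 4 * S := by linarith [h4]
      _ = -(KL - τ) ^ 2 / S := h5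
  have hfinal : (P {x : ι → ℝ | L x ≤ τ}).toReal
      ≤ Real.exp (-(KL - τ) ^ 2 / S) := by
    refine hch.trans ?_
    rw [← Real.exp_add]
    refine le_trans (le_of_eq ?_) (Real.exp_le_exp.mpr hkey)
    congr 1
    ring
  rw [ENNReal.le_ofReal_iff_toReal_le (measure_ne_top P _) (Real.exp_pos _).le]
  exact hfinal
end

section
/- Let k, n be natural numbers with 1 ≤ k ≤ n, set p := k/n, and let W and W' be independent Binomial(k, p) random variables. Then for every real θ with 0 ≤ θ ≤ 1/k, E[exp(θ·W·W')] = Σ_{a=0}^{k} Σ_{b=0}^{k} C(k,a)·p^a·(1−p)^{k−a} · C(k,b)·p^b·(1−p)^{k−b} · exp(θ·a·b) ≤ ( 1 + (k/n)·( exp(2·k²·θ/n) − 1 ) )^{k}. -/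
open Real Finset

/-- Exponential moment bound for the product of two independent
`Binomial(k, k/n)` random variables: for `0 ≤ θ ≤ 1/k`,
`E[exp(θ·W·W')] ≤ (1 + (k/n)(exp(2k²θ/n) − 1))^k`. -/
theorem binomial_product_exponential_moment_bound
    (k n : ℕ) (hk : 1 ≤ k) (hkn : k ≤ n)
    (θ : ℝ) (hθ0 : 0 ≤ θ) (hθ : θ ≤ 1 / (k : ℝ)) :
    ∑ a ∈ Finset.range (k + 1), ∑ b ∈ Finset.range (k + 1),
        (Nat.choose k a : ℝ) * ((k : ℝ) / n) ^ a * (1 - (k : ℝ) / n) ^ (k - a)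
          * (Nat.choose k b : ℝ) * ((k : ℝ) / n) ^ b
          * (1 - (k : ℝ) / n) ^ (k - b)
          * Real.exp (θ * a * b)
      ≤ (1 + ((k : ℝ) / n) * (Real.exp (2 * (k : ℝ) ^ 2 * θ / n) - 1)) ^ k := by
  have hn : 0 < (n : ℝ) := by
    have : 1 ≤ n := le_trans hk hkn
    exact_mod_cast this
  set p : ℝ := (k : ℝ) / n with hp
  have hp0 : 0 ≤ p := div_nonneg (Nat.cast_nonneg k) hn.le
  have hp1 : p ≤ 1 := by
    rw [hp, div_le_one hn]; exact_mod_cast hkn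
  have h1p : 0 ≤ 1 - p := by linarith
  have hk0 : 0 < (k : ℝ) := by exact_mod_cast hk
  -- key pointwise bound on the inner binomial sum
  have key : ∀ a ∈ Finset.range (k + 1),
      ∑ b ∈ Finset.range (k + 1),
        (Nat.choose k a : ℝ) * p ^ a * (1 - p) ^ (k - a)
          * (Nat.choose k b : ℝ) * p ^ b * (1 - p) ^ (k - b)
          * Real.exp (θ * a * b)
      ≤ (Nat.choose k a : ℝ) * (p * Real.exp (2 * (k : ℝ) ^ 2 * θ / n)) ^ a
          * (1 - p) ^ (k - a) := by
    intro a ha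
    have haK : (a : ℝ) ≤ k := by
      have : a ≤ k := Nat.lt_succ_iff.mp (Finset.mem_range.mp ha)
      exact_mod_cast this
    have hθa0 : 0 ≤ θ * a := mul_nonneg hθ0 (Nat.cast_nonneg a)
    have hθa1 : θ * a ≤ 1 := by
      calc θ * a ≤ (1 / k) * k := by
            apply mul_le_mul hθ haK (Nat.cast_nonneg a) (by positivity)
        _ = 1 := by field_simp
    -- inner sum equals ((1-p) + p * exp(θ a))^k
    have inner_eq : ∑ b ∈ Finset.range (k + 1),
        (Nat.choose k a : ℝ) * p ^ a * (1 - p) ^ (k - a)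
          * (Nat.choose k b : ℝ) * p ^ b * (1 - p) ^ (k - b)
          * Real.exp (θ * a * b)
        = (Nat.choose k a : ℝ) * p ^ a * (1 - p) ^ (k - a)
          * (p * Real.exp (θ * a) + (1 - p)) ^ k := by
      rw [add_pow, Finset.mul_sum]
      apply Finset.sum_congr rfl
      intro b hb
      have : Real.exp (θ * a * b) = (Real.exp (θ * a)) ^ b := by
        rw [← Real.exp_nat_mul]; ring_nf
      rw [this, mul_pow]
      ring
    rw [inner_eq]
    -- bound (p exp(θa) + (1-p))^k ≤ exp(2 p θ a k) = (exp(2k²θ/n))^a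
    have hbase : p * Real.exp (θ * a) + (1 - p) ≤ Real.exp (2 * p * θ * a) := by
      have h2 : Real.exp (θ * a) - 1 ≤ 2 * (θ * a) := by
        have := Real.abs_exp_sub_one_le (x := θ * a) (by rw [abs_of_nonneg hθa0]; exact hθa1)
        rw [abs_of_nonneg hθa0] at this
        exact (abs_le.mp this).2
      have h3 : p * Real.exp (θ * a) + (1 - p) = 1 + p * (Real.exp (θ * a) - 1) := by ring
      rw [h3]
      calc 1 + p * (Real.exp (θ * a) - 1) ≤ 1 + p * (2 * (θ * a)) := by
            nlinarith
        _ ≤ Real.exp (p * (2 * (θ * a))) := by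
            have := Real.add_one_le_exp (p * (2 * (θ * (a:ℝ))))
            linarith
        _ = Real.exp (2 * p * θ * a) := by ring_nf
    have hbase0 : 0 ≤ p * Real.exp (θ * a) + (1 - p) := by positivity
    have hpow : (p * Real.exp (θ * a) + (1 - p)) ^ k
        ≤ (Real.exp (2 * p * θ * a)) ^ k :=
      pow_le_pow_left₀ hbase0 hbase k
    have hexp_eq : (Real.exp (2 * p * θ * a)) ^ k
        = (Real.exp (2 * (k : ℝ) ^ 2 * θ / n)) ^ a := by
      rw [← Real.exp_nat_mul, ← Real.exp_nat_mul]
      congr 1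
      rw [hp]
      field_simp
    calc (Nat.choose k a : ℝ) * p ^ a * (1 - p) ^ (k - a)
          * (p * Real.exp (θ * a) + (1 - p)) ^ k
        ≤ (Nat.choose k a : ℝ) * p ^ a * (1 - p) ^ (k - a)
          * (Real.exp (2 * (k : ℝ) ^ 2 * θ / n)) ^ a := by
          rw [← hexp_eq]
          apply mul_le_mul_of_nonneg_left hpow
          positivity
      _ = (Nat.choose k a : ℝ) * (p * Real.exp (2 * (k : ℝ) ^ 2 * θ / n)) ^ a
          * (1 - p) ^ (k - a) := by rw [mul_pow]; ring
  calc ∑ a ∈ Finset.range (k + 1), ∑ b ∈ Finset.range (k + 1),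
        (Nat.choose k a : ℝ) * p ^ a * (1 - p) ^ (k - a)
          * (Nat.choose k b : ℝ) * p ^ b * (1 - p) ^ (k - b)
          * Real.exp (θ * a * b)
      ≤ ∑ a ∈ Finset.range (k + 1),
        (Nat.choose k a : ℝ) * (p * Real.exp (2 * (k : ℝ) ^ 2 * θ / n)) ^ a
          * (1 - p) ^ (k - a) := Finset.sum_le_sum key
    _ = (p * Real.exp (2 * (k : ℝ) ^ 2 * θ / n) + (1 - p)) ^ k := by
        rw [add_pow]
        apply Finset.sum_congr rfl
        intro a _
        ring
    _ = (1 + p * (Real.exp (2 * (k : ℝ) ^ 2 * θ / n) - 1)) ^ k := by ring_nf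
end

section
/- Let n, k be natural numbers with 1 ≤ k and 2k ≤ n. For i ∈ ZMod n let A_i := { i + j : j ∈ {0, 1, …, k−1} } ⊆ ZMod n be the circular interval of length k starting at i (so |A_i| = k). Then: (i) the number of i ∈ ZMod n with |A_0 ∩ A_i| = k equals 1; (ii) for every z with 1 ≤ z ≤ k−1, the number of i ∈ ZMod n with |A_0 ∩ A_i| = z equals 2; and (iii) the number of i ∈ ZMod n with |A_0 ∩ A_i| = 0 equals n − 2k + 1. -/
open Finset

/-- Overlap distribution of circular intervals: for circular intervals of
length `k` in `ZMod n` (with `1 ≤ k`, `2k ≤ n`), each interval has `k`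
elements, exactly one shift gives overlap `k` with the interval starting at
`0`, exactly two shifts give overlap `z` for each `1 ≤ z ≤ k − 1`, and
exactly `n − 2k + 1` shifts give overlap `0`. -/
theorem circular_interval_overlap_counts
    (n k : ℕ) [NeZero n] (hk : 1 ≤ k) (hn : 2 * k ≤ n)
    (A : ZMod n → Finset (ZMod n))
    (hA : ∀ i, A i = (Finset.range k).image fun j : ℕ => i + (j : ZMod n)) :
    (∀ i, (A i).card = k)
    ∧ (Finset.univ.filter fun i : ZMod n => (A 0 ∩ A i).card = k).card = 1
    ∧ (∀ z : ℕ, 1 ≤ z → z ≤ k - 1 →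
        (Finset.univ.filter fun i : ZMod n => (A 0 ∩ A i).card = z).card = 2)
    ∧ (Finset.univ.filter fun i : ZMod n => (A 0 ∩ A i).card = 0).card
        = n - 2 * k + 1 := by
  have hkn : k ≤ n := by omega
  -- injectivity of nat cast below n
  have hinj : ∀ a b : ℕ, a < n → b < n → (a : ZMod n) = (b : ZMod n) → a = b := by
    intro a b ha hb h
    have := congrArg ZMod.val h
    rwa [ZMod.val_cast_of_lt ha, ZMod.val_cast_of_lt hb] at this
  -- cardinality of each interval
  have hcard : ∀ i, (A i).card = k := by
    intro i
    rw [hA i, Finset.card_image_of_injOn, card_range]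
    intro a ha b hb hab
    simp only [mem_coe, mem_range] at ha hb
    have h1 : (a : ZMod n) = (b : ZMod n) := by
      exact add_left_cancel hab
    exact hinj a b (by omega) (by omega) h1
  -- key overlap computation
  have hover : ∀ i : ZMod n, (A 0 ∩ A i).card = (k - i.val) + (i.val - (n - k)) := by
    intro i
    set m := i.val with hm
    have hmn : m < n := ZMod.val_lt i
    have him : ((m : ℕ) : ZMod n) = i := by rw [hm, ZMod.natCast_val, ZMod.cast_id]
    have key : ∀ a b : ℕ, a < k → b < k →
        ((a : ZMod n) = i + (b : ZMod n) ↔ (a = m + b ∨ a + n = m + b)) := by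
      intro a b ha hb
      have h2 : (i + (b : ZMod n)) = ((m + b : ℕ) : ZMod n) := by
        rw [Nat.cast_add, him]
      rw [h2, ZMod.natCast_eq_natCast_iff, Nat.ModEq,
        Nat.mod_eq_of_lt (show a < n by omega)]
      constructor
      · intro h
        rcases lt_or_ge (m + b) n with h' | h'
        · left; rw [Nat.mod_eq_of_lt h'] at h; omega
        · right
          rw [Nat.mod_eq_sub_mod h', Nat.mod_eq_of_lt (by omega)] at h; omega
      · rintro (h | h)
        · rw [Nat.mod_eq_of_lt (by omega)]; omega
        · rw [Nat.mod_eq_sub_mod (by omega), Nat.mod_eq_of_lt (by omega)]; omega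
    have h1 : A 0 ∩ A i =
        ((Ico m k ∪ range (m - (n - k))).image fun a : ℕ => (a : ZMod n)) := by
      rw [hA 0, hA i]
      ext x
      simp only [mem_inter, mem_image, mem_range, mem_union, mem_Ico, zero_add]
      constructor
      · rintro ⟨⟨a, ha, rfl⟩, b, hb, hx⟩
        refine ⟨a, ?_, rfl⟩
        rcases (key a b ha hb).1 hx.symm with h | h
        · left; omega
        · right; omega
      · rintro ⟨a, ha, rfl⟩
        rcases ha with ⟨h1, h2⟩ | h
        · exact ⟨⟨a, h2, rfl⟩, a - m, by omega,
            ((key a (a - m) h2 (by omega)).2 (by omega)).symm⟩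
        · have hak : a < k := by omega
          refine ⟨⟨a, hak, rfl⟩, a + (n - m), by omega, ?_⟩
          exact ((key a (a + (n - m)) hak (by omega)).2 (by omega)).symm
    rw [h1, Finset.card_image_of_injOn, Finset.card_union_of_disjoint,
      Nat.card_Ico, card_range]
    · rw [Finset.disjoint_left]
      intro a ha hb
      simp only [mem_Ico] at ha
      simp only [mem_range] at hb
      omega
    · intro a ha b hb hab
      simp only [mem_coe, mem_union, mem_Ico, mem_range] at ha hb
      exact hinj a b (by omega) (by omega) hab
  -- transfer counting from ZMod n to range n
  have huniv : ∀ c : ℕ,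
      (Finset.univ.filter fun i : ZMod n => (A 0 ∩ A i).card = c).card
        = ((range n).filter fun m => (k - m) + (m - (n - k)) = c).card := by
    intro c
    apply Finset.card_bij (fun i _ => i.val)
    · intro i hi
      simp only [mem_filter, mem_univ, true_and] at hi
      simp only [mem_filter, mem_range]
      exact ⟨ZMod.val_lt i, by rw [← hover i]; exact hi⟩
    · intro a _ b _ h
      have := congrArg (fun t : ℕ => (t : ZMod n)) h
      simpa only [ZMod.natCast_val, ZMod.cast_id] using this
    · intro m hm
      simp only [mem_filter, mem_range] at hm
      refine ⟨(m : ZMod n), ?_, ZMod.val_cast_of_lt hm.1⟩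
      simp only [mem_filter, mem_univ, true_and]
      rw [hover, ZMod.val_cast_of_lt hm.1]
      exact hm.2
  refine ⟨hcard, ?_, ?_, ?_⟩
  · rw [huniv k]
    have h : ((range n).filter fun m => (k - m) + (m - (n - k)) = k) = {0} := by
      ext m
      simp only [mem_filter, mem_range, mem_singleton]
      omega
    rw [h, card_singleton]
  · intro z hz1 hz2
    rw [huniv z]
    have h : ((range n).filter fun m => (k - m) + (m - (n - k)) = z)
        = {k - z, n - k + z} := by
      ext m
      simp only [mem_filter, mem_range, mem_insert, mem_singleton]
      omega
    rw [h, Finset.card_pair (by omega)]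
  · rw [huniv 0]
    have h : ((range n).filter fun m => (k - m) + (m - (n - k)) = 0)
        = Icc k (n - k) := by
      ext m
      simp only [mem_filter, mem_range, mem_Icc]
      omega
    rw [h, Nat.card_Icc]
    omega
end

section
/- Let n, k be natural numbers with 1 ≤ k and 2k ≤ n, and define p : ℕ → ℝ by p(0) = (n − 2k + 1)/n, p(z) = 2/n for 1 ≤ z ≤ k−1, and p(k) = 1/n. Then for every real θ ≥ 0, Σ_{z=0}^{k} Σ_{z'=0}^{k} p(z)·p(z')·exp(θ·z·z') ≤ 1 + (4k²/n²)·( exp(θ·k²) − 1 ). -/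
open Real Finset

/-- Exponential moment bound for the product of two independent circular
interval overlap sizes: with `p(0) = (n−2k+1)/n`, `p(z) = 2/n` for
`1 ≤ z ≤ k−1`, `p(k) = 1/n`, and `θ ≥ 0`,
`Σ_{z,z'=0}^{k} p(z)p(z') exp(θ z z') ≤ 1 + (4k²/n²)(exp(θk²) − 1)`. -/
theorem circular_overlap_product_exponential_moment_bound
    (n k : ℕ) (hk : 1 ≤ k) (hn : 2 * k ≤ n)
    (p : ℕ → ℝ)
    (hp0 : p 0 = ((n : ℝ) - 2 * k + 1) / n)
    (hpz : ∀ z : ℕ, 1 ≤ z → z ≤ k - 1 → p z = 2 / (n : ℝ))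
    (hpk : p k = 1 / (n : ℝ))
    (θ : ℝ) (hθ : 0 ≤ θ) :
    ∑ z ∈ Finset.range (k + 1), ∑ z' ∈ Finset.range (k + 1),
        p z * p z' * Real.exp (θ * z * z')
      ≤ 1 + (4 * (k : ℝ) ^ 2 / (n : ℝ) ^ 2) * (Real.exp (θ * (k : ℝ) ^ 2) - 1) := by
  obtain ⟨m, rfl⟩ : ∃ m, k = m + 1 := ⟨k - 1, (Nat.succ_pred_eq_of_pos hk).symm⟩
  have hn0 : 0 < n := by omega
  have hnR : (0:ℝ) < n := by exact_mod_cast hn0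
  have hnn : (2:ℝ) * (m+1) ≤ n := by exact_mod_cast hn
  set E : ℝ := Real.exp (θ * ((m:ℝ)+1) ^ 2) with hE
  have hE1 : 1 ≤ E := by
    rw [hE, show (1:ℝ) = Real.exp 0 from (Real.exp_zero).symm]
    exact Real.exp_le_exp.mpr (by positivity)
  set c : ℝ := Real.sqrt (E - 1) with hc
  have hc2 : c * c = E - 1 := Real.mul_self_sqrt (by linarith)
  set g : ℕ → ℝ := fun z => if z = 0 then 0 else c with hg
  -- pointwise bound
  have hpoint : ∀ z ∈ Finset.range (m+2), ∀ z' ∈ Finset.range (m+2),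
      Real.exp (θ * z * z') ≤ 1 + g z * g z' := by
    intro z hz z' hz'
    rcases eq_or_ne z 0 with rfl | hz0
    · simp [hg]
    rcases eq_or_ne z' 0 with rfl | hz0'
    · simp [hg]
    · have hzle : (z:ℝ) ≤ (m:ℝ)+1 := by
        have := Finset.mem_range.mp hz; exact_mod_cast Nat.lt_succ_iff.mp this
      have hzle' : (z':ℝ) ≤ (m:ℝ)+1 := by
        have := Finset.mem_range.mp hz'; exact_mod_cast Nat.lt_succ_iff.mp this
      have hz1 : (1:ℝ) ≤ z := by exact_mod_cast Nat.one_le_iff_ne_zero.mpr hz0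
      have hz1' : (1:ℝ) ≤ z' := by exact_mod_cast Nat.one_le_iff_ne_zero.mpr hz0'
      have hzz : (z:ℝ) * (z':ℝ) ≤ ((m:ℝ)+1) ^ 2 := by nlinarith
      have : θ * z * z' ≤ θ * ((m:ℝ)+1) ^ 2 := by
        calc θ * z * z' = θ * ((z:ℝ) * z') := by ring
        _ ≤ θ * ((m:ℝ)+1) ^ 2 := mul_le_mul_of_nonneg_left hzz hθ
      have hle : Real.exp (θ * z * z') ≤ E := by rw [hE]; exact Real.exp_le_exp.mpr this
      simp only [hg, if_neg hz0, if_neg hz0']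
      rw [hc2]; linarith
  -- nonnegativity of p on the range
  have hpnn : ∀ z ∈ Finset.range (m+2), 0 ≤ p z := by
    intro z hz
    have hzm : z ≤ m + 1 := Nat.lt_succ_iff.mp (Finset.mem_range.mp hz)
    rcases eq_or_ne z 0 with rfl | hz0
    · rw [hp0]
      have : (0:ℝ) ≤ (n:ℝ) - 2*((m:ℝ)+1) + 1 := by push_cast at hnn ⊢; linarith
      have h2 : ((2:ℝ)) * ((m:ℕ)+1 : ℕ) = 2*((m:ℝ)+1) := by push_cast; ring
      apply div_nonneg _ hnR.le
      push_cast; linarith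
    rcases eq_or_ne z (m+1) with rfl | hzk
    · rw [hpk]; positivity
    · rw [hpz z (Nat.one_le_iff_ne_zero.mpr hz0) (by omega)]; positivity
  -- sums
  have hsum1 : ∑ z ∈ Finset.range (m+2), p z = 1 := by
    rw [Finset.sum_range_succ, Finset.sum_range_succ']
    have : ∀ i ∈ Finset.range m, p (i+1) = 2 / (n:ℝ) := by
      intro i hi
      exact hpz _ (by omega) (by have := Finset.mem_range.mp hi; omega)
    rw [Finset.sum_congr rfl this, Finset.sum_const, hp0, hpk]
    simp only [Finset.card_range, nsmul_eq_mul]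
    field_simp
    push_cast
    ring
  have hsum2 : ∑ z ∈ Finset.range (m+2), p z * g z = (2*(m:ℝ)+1)/n * c := by
    rw [Finset.sum_range_succ, Finset.sum_range_succ']
    have : ∀ i ∈ Finset.range m, p (i+1) * g (i+1) = 2 / (n:ℝ) * c := by
      intro i hi
      rw [hpz _ (by omega) (by have := Finset.mem_range.mp hi; omega)]
      simp [hg]
    rw [Finset.sum_congr rfl this, Finset.sum_const, hpk]
    simp only [Finset.card_range, nsmul_eq_mul, hg, if_pos rfl]
    simp only [if_neg (Nat.succ_ne_zero m)]
    field_simp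
    ring
  have hstep : ∑ z ∈ Finset.range (m+2), ∑ z' ∈ Finset.range (m+2),
      p z * p z' * Real.exp (θ * z * z')
      ≤ ∑ z ∈ Finset.range (m+2), ∑ z' ∈ Finset.range (m+2),
      p z * p z' * (1 + g z * g z') := by
    apply Finset.sum_le_sum
    intro z hz
    apply Finset.sum_le_sum
    intro z' hz'
    exact mul_le_mul_of_nonneg_left (hpoint z hz z' hz')
      (mul_nonneg (hpnn z hz) (hpnn z' hz'))
  have hexpand : ∑ z ∈ Finset.range (m+2), ∑ z' ∈ Finset.range (m+2),
      p z * p z' * (1 + g z * g z')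
      = (∑ z ∈ Finset.range (m+2), p z) * (∑ z ∈ Finset.range (m+2), p z)
        + (∑ z ∈ Finset.range (m+2), p z * g z) *
          (∑ z ∈ Finset.range (m+2), p z * g z) := by
    rw [Finset.sum_mul_sum, Finset.sum_mul_sum, ← Finset.sum_add_distrib]
    refine Finset.sum_congr rfl fun z _ => ?_
    rw [← Finset.sum_add_distrib]
    exact Finset.sum_congr rfl fun z' _ => by ring
  have hkey : ∑ z ∈ Finset.range (m+2), ∑ z' ∈ Finset.range (m+2),
      p z * p z' * Real.exp (θ * z * z')
      ≤ 1 + (2*(m:ℝ)+1)^2 / (n:ℝ)^2 * (E - 1) := by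
    calc _ ≤ _ := hstep
    _ = _ := hexpand
    _ = 1 + (2*(m:ℝ)+1)^2 / (n:ℝ)^2 * (E - 1) := by
        rw [hsum1, hsum2, one_mul,
          show ((2*(m:ℝ)+1)/n*c)*((2*(m:ℝ)+1)/n*c)
            = (2*(m:ℝ)+1)^2/(n:ℝ)^2*(c*c) by ring, hc2]
  have hfinal : 1 + (2*(m:ℝ)+1)^2 / (n:ℝ)^2 * (E - 1)
      ≤ 1 + (4 * ((m:ℝ)+1) ^ 2 / (n : ℝ) ^ 2) * (E - 1) := by
    have h1 : (2*(m:ℝ)+1)^2 ≤ 4 * ((m:ℝ)+1)^2 := by nlinarith [Nat.cast_nonneg (α := ℝ) m]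
    have h2 : (0:ℝ) ≤ E - 1 := by linarith
    have h3 : (0:ℝ) < (n:ℝ)^2 := by positivity
    apply add_le_add_right
    apply mul_le_mul_of_nonneg_right _ h2
    gcongr
  have hfin := hkey.trans hfinal
  have hcast : ((m+1 : ℕ):ℝ) = (m:ℝ)+1 := by push_cast; ring
  simpa [hcast, hE] using hfin
end
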